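/- arXiv:2107.05267 — 2 statements merged into one kernel-verified Lean document; each statement's English description precedes it below -/
import Mathlib

section
/- Let f be a probability density on (0,∞) with ∫_0^∞ x^{1/2} f(x) dx < ∞ and let S(x) = ∫_x^∞ f(y) dy be the associated survival function. Then ∫_0^∞ S(x)^2 dx ≤ (∫_0^∞ x^{1/2} f(x) dx)^2; in particular S ∈ L^2((0,∞)). -/
/-!
Write `ν` for the measure with density `f` on `(0, ∞)`, so that `S x = ν (x, ∞)` for `x > 0`.
Then `S x ^ 2 = (ν ⊗ ν) {(y, z) | x < y, x < z}`, and integrating over `x > 0` by Tonelli gives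
`∫∫ min y z dν(y) dν(z)`. Since `min y z ≤ √y √z`, this is at most `(∫ √y dν(y))²`.
-/

open MeasureTheory Set

theorem Real.min_le_sqrt_mul_sqrt (y z : ℝ) : min y z ≤ √y * √z := by
  rcases le_total (min y z) 0 with h | h
  · exact h.trans (by positivity)
  · calc min y z = √(min y z) * √(min y z) := (Real.mul_self_sqrt h).symm
      _ ≤ √y * √z := by gcongr <;> simp

namespace MeasureTheory

theorem setIntegral_eq_toReal_withDensity_restrict {α : Type*} [MeasurableSpace α]
    {μ : Measure α} {f : α → ℝ} {s t : Set α} (hs : MeasurableSet s) (hst : s ⊆ t)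
    (hf : AEStronglyMeasurable f (μ.restrict s)) (hf_nonneg : 0 ≤ᵐ[μ.restrict s] f) :
    ∫ y in s, f y ∂μ = (((μ.restrict t).withDensity fun y => ENNReal.ofReal (f y)) s).toReal := by
  rw [integral_eq_lintegral_of_nonneg_ae hf_nonneg hf, withDensity_apply _ hs,
    Measure.restrict_restrict hs, inter_eq_left.mpr hst]

variable (ν : Measure ℝ)

theorem measurable_measure_Ioi : Measurable fun x => ν (Ioi x) :=
  Antitone.measurable fun _ _ hxy => measure_mono (Ioi_subset_Ioi hxy)

variable [SFinite ν]

theorem lintegral_measure_Ioi_sq :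
    ∫⁻ x in Ioi 0, ν (Ioi x) ^ 2 = ∫⁻ p, ENNReal.ofReal (min p.1 p.2) ∂ν.prod ν := by
  have hs : MeasurableSet {q : ℝ × ℝ × ℝ | q.1 < q.2.1 ∧ q.1 < q.2.2} :=
    (measurableSet_lt measurable_fst (by fun_prop)).inter
      (measurableSet_lt measurable_fst (by fun_prop))
  calc ∫⁻ x in Ioi 0, ν (Ioi x) ^ 2
      = ∫⁻ x in Ioi 0, ν.prod ν (Prod.mk x ⁻¹' {q | q.1 < q.2.1 ∧ q.1 < q.2.2}) := by
        congr! 2 with x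
        rw [sq, ← Measure.prod_prod]
        rfl
    _ = ∫⁻ p, volume.restrict (Ioi 0) ((fun x => (x, p)) ⁻¹' {q | q.1 < q.2.1 ∧ q.1 < q.2.2})
          ∂ν.prod ν := by
        rw [← Measure.prod_apply hs, Measure.prod_apply_symm hs]
    _ = ∫⁻ p, ENNReal.ofReal (min p.1 p.2) ∂ν.prod ν := by
        refine lintegral_congr fun p => ?_
        have hslice : (fun x => (x, p)) ⁻¹' {q : ℝ × ℝ × ℝ | q.1 < q.2.1 ∧ q.1 < q.2.2}
            = Iio (min p.1 p.2) := by
          ext x; simp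
        rw [hslice, Measure.restrict_apply measurableSet_Iio, Iio_inter_Ioi, Real.volume_Ioo,
          sub_zero]

theorem lintegral_measure_Ioi_sq_le :
    ∫⁻ x in Ioi 0, ν (Ioi x) ^ 2 ≤ (∫⁻ y, ENNReal.ofReal √y ∂ν) ^ 2 := by
  have hsqrt : Measurable fun y : ℝ => ENNReal.ofReal √y := by fun_prop
  calc ∫⁻ x in Ioi 0, ν (Ioi x) ^ 2
      = ∫⁻ p, ENNReal.ofReal (min p.1 p.2) ∂ν.prod ν := lintegral_measure_Ioi_sq ν
    _ ≤ ∫⁻ p, ENNReal.ofReal √p.1 * ENNReal.ofReal √p.2 ∂ν.prod ν := by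
        gcongr with p
        rw [← ENNReal.ofReal_mul (Real.sqrt_nonneg _)]
        exact ENNReal.ofReal_le_ofReal (Real.min_le_sqrt_mul_sqrt _ _)
    _ = (∫⁻ y, ENNReal.ofReal √y ∂ν) ^ 2 := by
        rw [lintegral_prod_mul hsqrt.aemeasurable hsqrt.aemeasurable, sq]

variable {ν}

theorem integrableOn_toReal_measure_Ioi_sq (h : ∫⁻ y, ENNReal.ofReal √y ∂ν ≠ ⊤) :
    IntegrableOn (fun x => (ν (Ioi x)).toReal ^ 2) (Ioi 0) := by
  have hint := integrable_toReal_of_lintegral_ne_top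
    ((measurable_measure_Ioi ν).pow_const 2).aemeasurable
    ((lintegral_measure_Ioi_sq_le ν).trans_lt (ENNReal.pow_lt_top h.lt_top)).ne
  simp only [ENNReal.toReal_pow] at hint
  exact hint

theorem setIntegral_toReal_measure_Ioi_sq_le (h : ∫⁻ y, ENNReal.ofReal √y ∂ν ≠ ⊤) :
    ∫ x in Ioi 0, (ν (Ioi x)).toReal ^ 2 ≤ (∫⁻ y, ENNReal.ofReal √y ∂ν).toReal ^ 2 := by
  have hfin := (lintegral_measure_Ioi_sq_le ν).trans_lt (ENNReal.pow_lt_top h.lt_top)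
  simp_rw [← ENNReal.toReal_pow]
  rw [integral_toReal ((measurable_measure_Ioi ν).pow_const 2).aemeasurable
    (ae_lt_top ((measurable_measure_Ioi ν).pow_const 2) hfin.ne)]
  exact ENNReal.toReal_mono (ENNReal.pow_ne_top h) (lintegral_measure_Ioi_sq_le ν)

end MeasureTheory

theorem stmt_1_general (f : ℝ → ℝ) (hf_meas : Measurable f)
    (hf_nonneg : ∀ x ∈ Ioi (0:ℝ), 0 ≤ f x)
    (hmom : IntegrableOn (fun x => Real.sqrt x * f x) (Ioi 0))
    (S : ℝ → ℝ) (hS : ∀ x, S x = ∫ y in Ioi x, f y) :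
    IntegrableOn (fun x => (S x) ^ 2) (Ioi 0) ∧
      ∫ x in Ioi (0:ℝ), (S x) ^ 2 ≤ (∫ x in Ioi (0:ℝ), Real.sqrt x * f x) ^ 2 := by
  set ν := (volume.restrict (Ioi 0)).withDensity fun y => ENNReal.ofReal (f y)
  have hS_eq : ∀ x ∈ Ioi (0:ℝ), S x ^ 2 = (ν (Ioi x)).toReal ^ 2 := fun x hx => by
    rw [hS, setIntegral_eq_toReal_withDensity_restrict measurableSet_Ioi
      (Ioi_subset_Ioi hx.le) hf_meas.aestronglyMeasurable
      (ae_restrict_of_forall_mem measurableSet_Ioi fun y hy =>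
        hf_nonneg y (mem_Ioi.2 (hx.trans hy)))]
  have hmom_nonneg : ∀ y ∈ Ioi (0:ℝ), 0 ≤ √y * f y := fun y hy =>
    mul_nonneg (Real.sqrt_nonneg y) (hf_nonneg y hy)
  have hmoment : ∫⁻ y, ENNReal.ofReal √y ∂ν = ENNReal.ofReal (∫ x in Ioi 0, √x * f x) := by
    rw [lintegral_withDensity_eq_lintegral_mul₀ hf_meas.ennreal_ofReal.aemeasurable (by fun_prop),
      ofReal_integral_eq_lintegral_ofReal hmom
        (ae_restrict_of_forall_mem measurableSet_Ioi hmom_nonneg)]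
    refine lintegral_congr fun y => ?_
    rw [Pi.mul_apply, mul_comm, ENNReal.ofReal_mul (Real.sqrt_nonneg y)]
  have hfin : ∫⁻ y, ENNReal.ofReal √y ∂ν ≠ ⊤ := hmoment ▸ ENNReal.ofReal_ne_top
  refine ⟨(integrableOn_toReal_measure_Ioi_sq hfin).congr_fun (fun x hx => (hS_eq x hx).symm)
    measurableSet_Ioi, ?_⟩
  calc ∫ x in Ioi 0, S x ^ 2 = ∫ x in Ioi 0, (ν (Ioi x)).toReal ^ 2 :=
        setIntegral_congr_fun measurableSet_Ioi hS_eq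
    _ ≤ (∫⁻ y, ENNReal.ofReal √y ∂ν).toReal ^ 2 := setIntegral_toReal_measure_Ioi_sq_le hfin
    _ = (∫ x in Ioi 0, √x * f x) ^ 2 := by
        rw [hmoment, ENNReal.toReal_ofReal (setIntegral_nonneg measurableSet_Ioi hmom_nonneg)]

/-- If `f` is a probability density on `(0,∞)` with finite half-moment and
`S x = ∫_x^∞ f`, then `∫_0^∞ S(x)^2 dx ≤ (∫_0^∞ x^{1/2} f(x) dx)^2`; in particular
`S ∈ L²((0,∞))`. -/
theorem stmt_1 (f : ℝ → ℝ) (hf_meas : Measurable f)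
    (hf_nonneg : ∀ x ∈ Ioi (0:ℝ), 0 ≤ f x)
    (hf_dens : ∫ x in Ioi (0:ℝ), f x = 1)
    (hmom : IntegrableOn (fun x => Real.sqrt x * f x) (Ioi 0))
    (S : ℝ → ℝ) (hS : ∀ x, S x = ∫ y in Ioi x, f y) :
    IntegrableOn (fun x => (S x) ^ 2) (Ioi 0) ∧
      ∫ x in Ioi (0:ℝ), (S x) ^ 2 ≤ (∫ x in Ioi (0:ℝ), Real.sqrt x * f x) ^ 2 :=
  stmt_1_general f hf_meas hf_nonneg hmom S hS
end

section
/- The map g : (0,∞) → ℂ, g(x) = x^{1/2 + it} (t ∈ ℝ fixed) is Hölder continuous with exponent 1/2: for all x, y > 0, |x^{1/2+it} − y^{1/2+it}| ≤ (1 + 4|t|^{1/2}) |x − y|^{1/2}. -/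
/-!
Write `x^{1/2+it} = √x · e^{it log x}`. For `y ≤ x` the difference splits as
`(√x - √y) e^{it log x} + √y (e^{it log x} - e^{it log y})`. The first term is at most
`√(x - y)`. In the second, the two unit vectors differ by at most `min 2 (|t| (log x - log y))`,
and `log x - log y ≤ (x - y) / y`; balancing the two bounds against the factor `√y` gives
`2 √(|t| (x - y))`.
-/

lemma Real.sqrt_sub_sqrt_le_sqrt_sub {x y : ℝ} (hy : 0 ≤ y) (hyx : y ≤ x) :
    √x - √y ≤ √(x - y) := by
  rw [sub_le_iff_le_add, Real.sqrt_le_left (by positivity)]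
  nlinarith [Real.sq_sqrt hy, Real.sq_sqrt (sub_nonneg.2 hyx),
    mul_nonneg (Real.sqrt_nonneg (x - y)) (Real.sqrt_nonneg y)]

lemma Real.log_sub_log_le_sub_div {x y : ℝ} (hx : 0 < x) (hy : 0 < y) :
    Real.log x - Real.log y ≤ (x - y) / y := by
  calc Real.log x - Real.log y = Real.log (x / y) := (Real.log_div hx.ne' hy.ne').symm
    _ ≤ x / y - 1 := Real.log_le_sub_one_of_pos (div_pos hx hy)
    _ = (x - y) / y := by field_simp

lemma Real.sqrt_mul_min_two_div_le {y a : ℝ} (hy : 0 < y) (ha : 0 ≤ a) :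
    √y * min 2 (a / y) ≤ 2 * √a := by
  rcases le_or_gt a y with hay | hya
  · have hs : 0 < √y := Real.sqrt_pos.2 hy
    have hsa : √a ≤ √y := Real.sqrt_le_sqrt hay
    calc √y * min 2 (a / y) ≤ √y * (a / y) := by gcongr; exact min_le_right _ _
      _ = √a * (√a / √y) := by
          field_simp
          rw [Real.sq_sqrt hy.le, Real.sq_sqrt ha]
      _ ≤ √a * 1 := by gcongr; exact div_le_one_of_le₀ hsa hs.le
      _ ≤ 2 * √a := by linarith [Real.sqrt_nonneg a]
  · calc √y * min 2 (a / y) ≤ √y * 2 := by gcongr; exact min_le_left _ _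
      _ ≤ 2 * √a := by linarith [Real.sqrt_le_sqrt hya.le]

lemma Complex.norm_exp_I_mul_ofReal_sub_exp_I_mul_ofReal_le (α β : ℝ) :
    ‖exp (I * α) - exp (I * β)‖ ≤ min 2 |α - β| := by
  refine le_min ?_ ?_
  · calc ‖exp (I * α) - exp (I * β)‖ ≤ ‖exp (I * α)‖ + ‖exp (I * β)‖ := norm_sub_le _ _
      _ = 2 := by rw [norm_exp_I_mul_ofReal, norm_exp_I_mul_ofReal]; norm_num
  · have hsplit : exp (I * α) - exp (I * β) = exp (I * β) * (exp (I * ↑(α - β)) - 1) := by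
      rw [mul_sub, mul_one, ← exp_add]; push_cast; ring_nf
    rw [hsplit, norm_mul, norm_exp_I_mul_ofReal, one_mul, ← Real.norm_eq_abs]
    exact Real.norm_exp_I_mul_ofReal_sub_one_le

lemma Complex.ofReal_cpow_half_add_I_mul (t : ℝ) {x : ℝ} (hx : 0 < x) :
    (x : ℂ) ^ ((1/2 : ℂ) + I * t) = (√x : ℂ) * exp (I * ↑(t * Real.log x)) := by
  have hx0 : (x : ℂ) ≠ 0 := by exact_mod_cast hx.ne'
  rw [cpow_add _ _ hx0]
  congr 1
  · rw [Real.sqrt_eq_rpow, ofReal_cpow hx.le]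
    norm_num
  · rw [cpow_def_of_ne_zero hx0, ← ofReal_log hx.le]
    push_cast
    ring_nf

lemma Complex.norm_ofReal_cpow_half_add_I_mul_sub_le_of_le (t : ℝ) {x y : ℝ} (hy : 0 < y)
    (hyx : y ≤ x) :
    ‖(x : ℂ) ^ ((1/2 : ℂ) + I * t) - (y : ℂ) ^ ((1/2 : ℂ) + I * t)‖
      ≤ (1 + 2 * √|t|) * √(x - y) := by
  have hx : 0 < x := hy.trans_le hyx
  set ex := exp (I * ↑(t * Real.log x))
  set ey := exp (I * ↑(t * Real.log y))
  have hlog : 0 ≤ Real.log x - Real.log y := sub_nonneg.2 (Real.log_le_log hy hyx)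
  have hfirst : ‖((√x - √y : ℝ) : ℂ) * ex‖ ≤ √(x - y) := by
    rw [norm_mul, norm_exp_I_mul_ofReal, mul_one, norm_real, Real.norm_eq_abs,
      abs_of_nonneg (sub_nonneg.2 (Real.sqrt_le_sqrt hyx))]
    exact Real.sqrt_sub_sqrt_le_sqrt_sub hy.le hyx
  have hsecond : ‖(√y : ℂ) * (ex - ey)‖ ≤ 2 * √|t| * √(x - y) := by
    rw [norm_mul, norm_real, Real.norm_of_nonneg (Real.sqrt_nonneg y)]
    calc √y * ‖ex - ey‖ ≤ √y * min 2 |t * Real.log x - t * Real.log y| := by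
          gcongr; exact norm_exp_I_mul_ofReal_sub_exp_I_mul_ofReal_le _ _
      _ ≤ √y * min 2 (|t| * (x - y) / y) := by
          rw [← mul_sub, abs_mul, abs_of_nonneg hlog, mul_div_assoc]
          gcongr
          exact Real.log_sub_log_le_sub_div hx hy
      _ ≤ 2 * √(|t| * (x - y)) :=
          Real.sqrt_mul_min_two_div_le hy (mul_nonneg (abs_nonneg t) (sub_nonneg.2 hyx))
      _ = 2 * √|t| * √(x - y) := by rw [Real.sqrt_mul (abs_nonneg t), mul_assoc]
  have hsplit :
      (√x : ℂ) * ex - (√y : ℂ) * ey = ((√x - √y : ℝ) : ℂ) * ex + (√y : ℂ) * (ex - ey) := by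
    push_cast; ring
  rw [ofReal_cpow_half_add_I_mul t hx, ofReal_cpow_half_add_I_mul t hy, hsplit]
  calc _ ≤ ‖((√x - √y : ℝ) : ℂ) * ex‖ + ‖(√y : ℂ) * (ex - ey)‖ := norm_add_le _ _
    _ ≤ √(x - y) + 2 * √|t| * √(x - y) := add_le_add hfirst hsecond
    _ = (1 + 2 * √|t|) * √(x - y) := by ring

/-- The map `x ↦ x^{1/2+it}` on `(0,∞)` is Hölder continuous with exponent `1/2`:
`|x^{1/2+it} - y^{1/2+it}| ≤ (1 + 4|t|^{1/2}) |x - y|^{1/2}`. -/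
theorem stmt_10 (t : ℝ) (x y : ℝ) (hx : 0 < x) (hy : 0 < y) :
    ‖(x:ℂ) ^ ((1/2 : ℂ) + Complex.I * t) - (y:ℂ) ^ ((1/2 : ℂ) + Complex.I * t)‖
      ≤ (1 + 4 * Real.sqrt |t|) * Real.sqrt |x - y| := by
  have hsharp : ‖(x:ℂ) ^ ((1/2 : ℂ) + Complex.I * t) - (y:ℂ) ^ ((1/2 : ℂ) + Complex.I * t)‖
      ≤ (1 + 2 * √|t|) * √|x - y| := by
    rcases le_total y x with hyx | hxy
    · rw [abs_of_nonneg (sub_nonneg.2 hyx)]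
      exact Complex.norm_ofReal_cpow_half_add_I_mul_sub_le_of_le t hy hyx
    · rw [abs_of_nonpos (sub_nonpos.2 hxy), neg_sub, norm_sub_rev]
      exact Complex.norm_ofReal_cpow_half_add_I_mul_sub_le_of_le t hx hxy
  refine hsharp.trans ?_
  gcongr
  norm_num
end
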